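/- arXiv:1710.10693 — 2 statements merged into one kernel-verified Lean document; each statement's English description precedes it below -/
import Mathlib

section
/- Fix n ≥ 1 and vectors β, γ ∈ ℝⁿ with β_i > 0 and γ_i < −1 for all i. For X ≥ 1, consider T(X) = Σ_{k ∈ ℤ_{≥1}ⁿ, ∏_i k_i^{β_i} ≥ X} ∏_i k_i^{γ_i}. Then for every ε > 0 one has T(X) = O_ε(X^{a(β,γ)+ε}), where a(β,γ) = max_{1≤i≤n} (γ_i + 1)/β_i (a negative number), with the constant depending only on n, β, γ and ε. -/
/-!
Rankin's trick. If `∏ kᵢ^{βᵢ} ≥ X` then for every `δ ≥ 0` the term `∏ kᵢ^{γᵢ}` is at most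
`X^{-δ} ∏ kᵢ^{γᵢ + δβᵢ}`, and summing the latter over all of `ℤ₊ⁿ` factors into a product of
convergent one-dimensional series as long as `γᵢ + δβᵢ < -1` for every `i`, that is
`δ < -a(β,γ)`. Taking `δ = max 0 (-(a + ε))` gives the bound `O(X^{a+ε})`.
-/

open Finset

theorem hasSum_prod_pi {α : Type*} (n : ℕ) (g : Fin n → α → ℝ) (hg : ∀ i m, 0 ≤ g i m)
    (hs : ∀ i, Summable (g i)) :
    HasSum (fun k : Fin n → α => ∏ i, g i (k i)) (∏ i, ∑' m, g i m) := by
  induction n with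
  | zero => simp
  | succ n ih =>
    have htail := ih (fun i => g i.succ) (fun i => hg i.succ) (fun i => hs i.succ)
    have hpair_summable := (hs 0).mul_of_nonneg htail.summable (hg 0)
      fun k => prod_nonneg fun i _ => hg i.succ (k i)
    have hpair := (hs 0).hasSum.mul htail hpair_summable
    have hsplit : (fun k : Fin (n + 1) → α => ∏ i, g i (k i)) =
        (fun x : α × (Fin n → α) => g 0 x.1 * ∏ i : Fin n, g i.succ (x.2 i)) ∘
          (Fin.consEquiv fun _ => α).symm := by
      funext k
      simp [Fin.prod_univ_succ, Fin.tail]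
    rw [hsplit, Fin.prod_univ_succ]
    exact (Fin.consEquiv fun _ => α).symm.hasSum_iff.mpr hpair

theorem prod_rpow_le_rpow_neg_mul_prod_rpow {ι : Type*} [Fintype ι] {x : ι → ℝ}
    (hx : ∀ i, 0 < x i) (β γ : ι → ℝ) {δ X : ℝ} (hδ : 0 ≤ δ) (hX : 0 < X)
    (hXx : X ≤ ∏ i, x i ^ β i) :
    ∏ i, x i ^ γ i ≤ X ^ (-δ) * ∏ i, x i ^ (γ i + δ * β i) := by
  have hsplit : ∏ i, x i ^ (γ i + δ * β i) = (∏ i, x i ^ β i) ^ δ * ∏ i, x i ^ γ i := by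
    rw [← Real.finsetProd_rpow _ _ fun i _ => (Real.rpow_nonneg (hx i).le _), ← prod_mul_distrib]
    refine prod_congr rfl fun i _ => ?_
    rw [Real.rpow_add (hx i), ← Real.rpow_mul (hx i).le, mul_comm δ, mul_comm]
  have hγ_nonneg : 0 ≤ ∏ i, x i ^ γ i := prod_nonneg fun i _ => Real.rpow_nonneg (hx i).le _
  calc ∏ i, x i ^ γ i = X ^ (-δ) * X ^ δ * ∏ i, x i ^ γ i := by
        rw [← Real.rpow_add hX, neg_add_cancel, Real.rpow_zero, one_mul]
    _ ≤ X ^ (-δ) * (∏ i, x i ^ β i) ^ δ * ∏ i, x i ^ γ i := by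
        gcongr
    _ = X ^ (-δ) * ∏ i, x i ^ (γ i + δ * β i) := by
        rw [hsplit, mul_assoc]

theorem rankin_tail_bound {n : ℕ} (β γ : Fin n → ℝ) {δ : ℝ} (hδ : 0 ≤ δ)
    (hexp : ∀ i, γ i + δ * β i < -1) {X : ℝ} (hX : 0 < X) :
    Summable (fun k : {k : Fin n → ℕ // (∀ i, 1 ≤ k i) ∧ X ≤ ∏ i, (k i : ℝ) ^ (β i)} =>
        ∏ i, ((k : Fin n → ℕ) i : ℝ) ^ (γ i)) ∧
      (∑' k : {k : Fin n → ℕ // (∀ i, 1 ≤ k i) ∧ X ≤ ∏ i, (k i : ℝ) ^ (β i)},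
          ∏ i, ((k : Fin n → ℕ) i : ℝ) ^ (γ i))
        ≤ X ^ (-δ) * ∏ i, ∑' m : ℕ, (m : ℝ) ^ (γ i + δ * β i) := by
  set s := {k : Fin n → ℕ | (∀ i, 1 ≤ k i) ∧ X ≤ ∏ i, (k i : ℝ) ^ (β i)}
  have hmajorant := hasSum_prod_pi n (fun i (m : ℕ) => (m : ℝ) ^ (γ i + δ * β i))
    (fun _ m => Real.rpow_nonneg m.cast_nonneg _) fun i => Real.summable_nat_rpow.mpr (hexp i)
  have hle : ∀ k : s, ∏ i, ((k : Fin n → ℕ) i : ℝ) ^ (γ i) ≤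
      X ^ (-δ) * ∏ i, ((k : Fin n → ℕ) i : ℝ) ^ (γ i + δ * β i) := fun ⟨k, hk1, hkX⟩ =>
    prod_rpow_le_rpow_neg_mul_prod_rpow (fun i => by exact_mod_cast hk1 i) β γ hδ hX hkX
  have hsummable_majorant : Summable fun k : s =>
      X ^ (-δ) * ∏ i, ((k : Fin n → ℕ) i : ℝ) ^ (γ i + δ * β i) :=
    (hmajorant.summable.subtype s).mul_left _
  have hsummable := hsummable_majorant.of_nonneg_of_le
    (fun k => prod_nonneg fun i _ => Real.rpow_nonneg (Nat.cast_nonneg _) _) hle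
  refine ⟨hsummable, ?_⟩
  calc _ ≤ ∑' k : s, X ^ (-δ) * ∏ i, ((k : Fin n → ℕ) i : ℝ) ^ (γ i + δ * β i) :=
        hsummable.tsum_le_tsum hle hsummable_majorant
    _ ≤ X ^ (-δ) * ∑' k : Fin n → ℕ, ∏ i, (k i : ℝ) ^ (γ i + δ * β i) := by
        rw [tsum_mul_left]
        gcongr
        exact hmajorant.summable.tsum_subtype_le _ s
          fun k => prod_nonneg fun i _ => Real.rpow_nonneg (Nat.cast_nonneg _) _
    _ = X ^ (-δ) * ∏ i, ∑' m : ℕ, (m : ℝ) ^ (γ i + δ * β i) := by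
        rw [hmajorant.tsum_eq]

/-- **Weighted lattice-point sum over the tail region** (Lemma 4.6).  Fix `n ≥ 1` and
`β, γ : Fin n → ℝ` with `β i > 0` and `γ i < -1` for all `i`.  For `X ≥ 1` let
`T(X) = Σ_{k ∈ ℤ₊ⁿ, ∏ kᵢ^{βᵢ} ≥ X} ∏ kᵢ^{γᵢ}`.  Then for every `ε > 0` one has
`T(X) = O_ε(X^{a(β,γ)+ε})` where `a(β,γ) = max_i (γ i + 1)/(β i)` (a negative
number). -/
theorem weighted_sum_above (n : ℕ) (hn : 0 < n) (β γ : Fin n → ℝ)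
    (hβ : ∀ i, 0 < β i) (hγ : ∀ i, γ i < -1) :
    ∀ ε : ℝ, 0 < ε → ∃ C : ℝ, 0 < C ∧ ∀ X : ℝ, 1 ≤ X →
      Summable (fun k : {k : Fin n → ℕ // (∀ i, 1 ≤ k i) ∧ X ≤ ∏ i, (k i : ℝ) ^ (β i)} =>
        ∏ i, ((k : Fin n → ℕ) i : ℝ) ^ (γ i)) ∧
      (∑' k : {k : Fin n → ℕ // (∀ i, 1 ≤ k i) ∧ X ≤ ∏ i, (k i : ℝ) ^ (β i)},
          ∏ i, ((k : Fin n → ℕ) i : ℝ) ^ (γ i))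
        ≤ C * X ^ ((Finset.univ.sup' (Finset.univ_nonempty_iff.mpr ⟨⟨0, hn⟩⟩)
            fun i => (γ i + 1) / β i) + ε) := by
  intro ε hε
  set a := Finset.univ.sup' (Finset.univ_nonempty_iff.mpr ⟨⟨0, hn⟩⟩) fun i => (γ i + 1) / β i
  have ha_neg : a < 0 :=
    (sup'_lt_iff _).2 fun i _ => div_neg_of_neg_of_pos (by linarith [hγ i]) (hβ i)
  set δ := max 0 (-(a + ε))
  have hδa : δ < -a := max_lt (by linarith) (by linarith)
  have hexp : ∀ i, γ i + δ * β i < -1 := fun i => by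
    have hia : (γ i + 1) / β i < -δ :=
      (le_sup' (fun i => (γ i + 1) / β i) (mem_univ i)).trans_lt (by linarith)
    linarith [(div_lt_iff₀ (hβ i)).1 hia]
  set C := ∏ i, ∑' m : ℕ, (m : ℝ) ^ (γ i + δ * β i)
  have hC : 1 ≤ C := one_le_prod fun i _ => by
    simpa using (Real.summable_nat_rpow.mpr (hexp i)).le_tsum 1
      fun _ _ => Real.rpow_nonneg (Nat.cast_nonneg _) _
  refine ⟨C, by linarith, fun X hX => ?_⟩
  obtain ⟨hsummable, hbound⟩ :=
    rankin_tail_bound β γ (le_max_left 0 _) hexp (by linarith : 0 < X)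
  refine ⟨hsummable, hbound.trans ?_⟩
  rw [mul_comm]
  gcongr
  linarith [le_max_right 0 (-(a + ε))]
end

section
/- Let S₁ and S₂ be multisets of positive integers with counting functions F_i(X) = #{s ∈ S_i : s ≤ X}, and suppose F_i(X) ~ A_i·X^{n_i}·(ln X)^{r_i} as X → ∞, where A_i > 0, 0 < n_i ≤ 1 and r_i are nonnegative integers, for i = 1, 2. Let a, b > 0 and P_{a,b}(X) = #{(s₁, s₂) : s₁ ∈ S₁, s₂ ∈ S₂, s₁^a·s₂^b ≤ X}. If n₁/a − n₂/b > 0, then there exists a constant C > 0 such that P_{a,b}(X) ~ C·X^{n₁/a}·(ln X)^{r₁}. -/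
/-!
Put `u₁ = f₁ ^ a` and `u₂ = f₂ ^ b`. Their counting functions `N₁`, `N₂` satisfy
`N₁(X) ~ (A₁ / a ^ r₁) X ^ α (log X) ^ r₁` with `α = n₁ / a`, and `N₂(X) = O(X ^ β)` for every
`β > n₂ / b`; splitting `S₂` into dyadic blocks of `u₂`, the latter makes `∑ u₂(s) ^ (-α)`
converge because `α > n₂ / b`. Summing over the second coordinate,
`P(X) = ∑_{s ∈ S₂} N₁(X / u₂(s))`, and after division by `X ^ α (log X) ^ r₁` the `s`-th term
tends to `(A₁ / a ^ r₁) u₂(s) ^ (-α)` and is bounded by a constant multiple of `u₂(s) ^ (-α)`.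
Dominated convergence gives the theorem with `C = (A₁ / a ^ r₁) ∑_{s ∈ S₂} u₂(s) ^ (-α)`.
-/

open Filter Topology Asymptotics Real

noncomputable section

-- Both sides vanish when the subtype is infinite.
theorem Nat.card_subtype_eq_tsum_indicator {α : Type*} (p : α → Prop) :
    (Nat.card {x // p x} : ℝ) = ∑' x, {x | p x}.indicator 1 x := by
  rw [← tsum_subtype]
  simp only [Pi.one_apply, tsum_const, nsmul_one]
  rfl

theorem Nat.card_subtype_prod_eq_tsum {α β : Type*} (p : α → β → Prop)
    (hp : {q : α × β | p q.1 q.2}.Finite) :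
    (Nat.card {q : α × β // p q.1 q.2} : ℝ) = ∑' b, (Nat.card {a // p a b} : ℝ) := by
  have hsum : Summable ({q : α × β | p q.1 q.2}.indicator (1 : α × β → ℝ)) :=
    summable_of_hasFiniteSupport (hp.subset Set.support_indicator_subset)
  rw [Nat.card_subtype_eq_tsum_indicator, ← (Equiv.prodComm β α).tsum_eq]
  refine (hsum.comp_injective (Equiv.prodComm β α).injective).tsum_prod.trans ?_
  congr 1 with b
  rw [Nat.card_subtype_eq_tsum_indicator]
  rfl

theorem Monotone.exists_forall_le_mul_of_isBigO {F g : ℝ → ℝ} (hF : Monotone F)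
    (hFg : F =O[atTop] g) (hg : ∀ Y, 1 ≤ Y → 1 ≤ g Y) :
    ∃ K, 0 ≤ K ∧ ∀ Y, 1 ≤ Y → F Y ≤ K * g Y := by
  obtain ⟨c, hc⟩ := hFg.bound
  obtain ⟨Y₀, hY₀⟩ := eventually_atTop.1 hc
  refine ⟨|c| + |F Y₀|, by positivity, fun Y hY => ?_⟩
  have hg0 : 0 ≤ g Y := zero_le_one.trans (hg Y hY)
  rcases le_total Y₀ Y with hY₀Y | hYY₀
  · have := hY₀ Y hY₀Y
    rw [Real.norm_eq_abs, Real.norm_eq_abs, abs_of_nonneg hg0] at this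
    nlinarith [le_abs_self (F Y), le_abs_self c, abs_nonneg (F Y₀)]
  · nlinarith [hF hYY₀, le_abs_self (F Y₀), mul_nonneg (abs_nonneg c) hg0,
      mul_nonneg (abs_nonneg (F Y₀)) (sub_nonneg.2 (hg Y hY))]

theorem isBigO_rpow_mul_log_pow_one_add (α : ℝ) (r : ℕ) :
    (fun X => X ^ α * log X ^ r) =O[atTop] fun X => X ^ α * (1 + log X) ^ r := by
  refine .of_norm_eventuallyLE ?_
  filter_upwards [eventually_ge_atTop 1] with X hX
  have hlog := Real.log_nonneg hX
  rw [Real.norm_of_nonneg (by positivity)]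
  gcongr
  linarith

theorem isBigO_rpow_mul_log_pow_rpow {n m : ℝ} (r : ℕ) (h : n < m) :
    (fun X => X ^ n * log X ^ r) =O[atTop] fun X => X ^ m := by
  have hlog := (isLittleO_log_rpow_rpow_atTop r (sub_pos.2 h)).isBigO
  refine ((isBigO_refl (fun X : ℝ => X ^ n) atTop).mul hlog).congr' ?_ ?_
  · simp only [Real.rpow_natCast]; rfl
  · filter_upwards [eventually_gt_atTop 0] with X hX
    rw [← Real.rpow_add hX, add_sub_cancel]

theorem Asymptotics.IsEquivalent.tendsto_comp_div_const_div {F : ℝ → ℝ} {A α T : ℝ} {r : ℕ}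
    (hF : F ~[atTop] fun X => A * (X ^ α * Real.log X ^ r)) (hT : 0 < T) :
    Tendsto (fun X => F (X / T) / (X ^ α * Real.log X ^ r)) atTop (𝓝 (A * T ^ (-α))) := by
  have hlog : (fun X => Real.log (X / T)) ~[atTop] Real.log := by
    refine (IsEquivalent.refl.sub_isLittleO
      (isLittleO_const_log_atTop (c := Real.log T))).congr_left ?_
    filter_upwards [eventually_gt_atTop 0] with X hX
    exact (Real.log_div hX.ne' hT.ne').symm
  have hscale : (fun X => A * ((X / T) ^ α * Real.log (X / T) ^ r)) ~[atTop]
      fun X => A * T ^ (-α) * (X ^ α * Real.log X ^ r) := by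
    refine ((IsEquivalent.refl (u := fun X => A * T ^ (-α) * X ^ α)).mul
      (hlog.pow r)).congr_left ?_ |>.congr_right ?_
    · filter_upwards [eventually_ge_atTop 0] with X hX
      simp only [Pi.mul_apply, Pi.pow_apply, Real.div_rpow hX hT.le, Real.rpow_neg hT.le]
      ring
    · exact .of_eq (funext fun X => by simp only [Pi.mul_apply, Pi.pow_apply]; ring)
  have h := (hF.comp_tendsto (tendsto_id.atTop_div_const hT)).trans hscale
  refine (h.div IsEquivalent.refl).symm.tendsto_nhds (tendsto_const_nhds.congr' ?_)
  filter_upwards [eventually_gt_atTop 1] with X hX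
  have : X ^ α * Real.log X ^ r ≠ 0 := by
    have := Real.log_pos hX
    positivity
  simp only [Pi.div_apply, mul_div_assoc, div_self this, mul_one]

theorem apply_div_le_of_le_rpow_mul_one_add_log_pow {F : ℝ → ℝ} {K α T X : ℝ} {r : ℕ}
    (hF0 : ∀ Y < 1, F Y = 0) (hK : 0 ≤ K) (hF : ∀ Y, 1 ≤ Y → F Y ≤ K * (Y ^ α * (1 + log Y) ^ r))
    (hT : 1 ≤ T) (hX : exp 1 ≤ X) :
    F (X / T) ≤ K * 2 ^ r * T ^ (-α) * (X ^ α * log X ^ r) := by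
  have hX0 : 0 < X := (exp_pos 1).trans_le hX
  have hlogX : 1 ≤ log X := (le_log_iff_exp_le hX0).2 hX
  have hT0 : 0 < T := zero_lt_one.trans_le hT
  rcases lt_or_ge (X / T) 1 with hXT | hXT
  · rw [hF0 _ hXT]
    have : 0 ≤ log X := by linarith
    positivity
  have hlog : 1 + log (X / T) ≤ 2 * log X := by
    rw [Real.log_div hX0.ne' hT0.ne']
    linarith [Real.log_nonneg hT]
  calc F (X / T) ≤ K * ((X / T) ^ α * (1 + log (X / T)) ^ r) := hF _ hXT
    _ ≤ K * ((X / T) ^ α * (2 * log X) ^ r) := by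
        gcongr
        linarith [Real.log_nonneg hXT]
    _ = K * 2 ^ r * T ^ (-α) * (X ^ α * log X ^ r) := by
        rw [Real.div_rpow hX0.le hT0.le, Real.rpow_neg hT0.le]
        ring

theorem two_pow_log_floor_le {x : ℝ} (hx : 1 ≤ x) : (2 : ℝ) ^ Nat.log 2 ⌊x⌋₊ ≤ x := by
  have h : ((2 ^ Nat.log 2 ⌊x⌋₊ : ℕ) : ℝ) ≤ ⌊x⌋₊ :=
    Nat.cast_le.2 (Nat.pow_log_le_self 2 (Nat.floor_pos.2 hx).ne')
  push_cast at h
  exact h.trans (Nat.floor_le (by linarith))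

theorem lt_two_pow_log_floor_succ {x : ℝ} (hx : 0 ≤ x) :
    x < (2 : ℝ) ^ (Nat.log 2 ⌊x⌋₊ + 1) := by
  exact_mod_cast (Nat.floor_lt hx).1 (Nat.lt_pow_succ_log_self one_lt_two _)

def countingFn {S : Type*} (u : S → ℝ) (X : ℝ) : ℝ := Nat.card {s : S // u s ≤ X}

namespace countingFn

variable {S : Type*} {u : S → ℝ}

theorem nonneg (X : ℝ) : 0 ≤ countingFn u X := Nat.cast_nonneg _

theorem eq_ncard (X : ℝ) : countingFn u X = {s | u s ≤ X}.ncard := by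
  rw [countingFn, ← Nat.card_coe_set_eq]
  rfl

theorem card_le {t : Finset S} {Y : ℝ} (hfin : {s | u s ≤ Y}.Finite)
    (ht : ∀ s ∈ t, u s ≤ Y) : (t.card : ℝ) ≤ countingFn u Y := by
  rw [eq_ncard, ← Set.ncard_coe_finset]
  exact_mod_cast Set.ncard_le_ncard ht hfin

theorem mono (hfin : ∀ X, {s | u s ≤ X}.Finite) : Monotone (countingFn u) := by
  intro X Y hXY
  simp only [eq_ncard]
  exact_mod_cast Set.ncard_le_ncard (fun s (hs : u s ≤ X) => hs.trans hXY) (hfin Y)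

theorem eq_zero_of_lt (hu : ∀ s, 1 ≤ u s) {X : ℝ} (hX : X < 1) : countingFn u X = 0 := by
  have : IsEmpty {s // u s ≤ X} := ⟨fun s => (hu s.1).not_gt (s.2.trans_lt hX)⟩
  simp [countingFn]

theorem rpow (hu : ∀ s, 0 ≤ u s) {a X : ℝ} (ha : 0 < a) (hX : 0 ≤ X) :
    countingFn (fun s => u s ^ a) X = countingFn u (X ^ a⁻¹) := by
  simp only [countingFn, Real.le_rpow_inv_iff_of_pos (hu _) hX ha]

theorem finite_rpow_le (hu : ∀ s, 0 ≤ u s) (hfin : ∀ X, {s | u s ≤ X}.Finite) {a : ℝ}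
    (ha : 0 < a) (X : ℝ) : {s | u s ^ a ≤ X}.Finite := by
  refine (hfin (|X| ^ a⁻¹)).subset fun s (hs : u s ^ a ≤ X) => ?_
  exact (Real.le_rpow_inv_iff_of_pos (hu s) (abs_nonneg X) ha).2 (hs.trans (le_abs_self X))

theorem prod_eq_tsum {S₁ S₂ : Type*} {u₁ : S₁ → ℝ} {u₂ : S₂ → ℝ} (hu₁ : ∀ s, 1 ≤ u₁ s)
    (hu₂ : ∀ s, 1 ≤ u₂ s) (hfin₁ : ∀ X, {s | u₁ s ≤ X}.Finite)
    (hfin₂ : ∀ X, {s | u₂ s ≤ X}.Finite) (X : ℝ) :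
    countingFn (fun p : S₁ × S₂ => u₁ p.1 * u₂ p.2) X = ∑' s, countingFn u₁ (X / u₂ s) := by
  have hfin : {p : S₁ × S₂ | u₁ p.1 * u₂ p.2 ≤ X}.Finite := by
    refine ((hfin₁ X).prod (hfin₂ X)).subset fun p (hp : u₁ p.1 * u₂ p.2 ≤ X) => ⟨?_, ?_⟩
    · exact (le_mul_of_one_le_right (zero_le_one.trans (hu₁ _)) (hu₂ _)).trans hp
    · exact (le_mul_of_one_le_left (zero_le_one.trans (hu₂ _)) (hu₁ _)).trans hp
  simp only [countingFn, le_div_iff₀ (zero_lt_one.trans_le (hu₂ _))]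
  exact Nat.card_subtype_prod_eq_tsum (fun s₁ s₂ => u₁ s₁ * u₂ s₂ ≤ X) hfin

theorem isEquivalent_rpow (hu : ∀ s, 0 ≤ u s) {a A n : ℝ} {r : ℕ} (ha : 0 < a)
    (h : countingFn u ~[atTop] fun X => A * X ^ n * log X ^ r) :
    countingFn (fun s => u s ^ a) ~[atTop] fun X => A / a ^ r * (X ^ (n / a) * log X ^ r) := by
  refine ((h.comp_tendsto (tendsto_rpow_atTop (inv_pos.2 ha))).congr_left ?_).congr_right ?_
  · filter_upwards [eventually_ge_atTop 0] with X hX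
    exact (rpow hu ha hX).symm
  · filter_upwards [eventually_gt_atTop 0] with X hX
    simp only [Function.comp_apply, Real.log_rpow hX, ← Real.rpow_mul hX.le, mul_pow, inv_pow]
    field_simp

theorem summable_rpow_neg_of_isBigO (hu : ∀ s, 1 ≤ u s) (hfin : ∀ X, {s | u s ≤ X}.Finite)
    {α β : ℝ} (hβ : 0 ≤ β) (hβα : β < α) (hN : countingFn u =O[atTop] fun Y => Y ^ β) :
    Summable fun s => u s ^ (-α) := by
  obtain ⟨K, hK, hKN⟩ :=
    (mono hfin).exists_forall_le_mul_of_isBigO hN fun Y hY => Real.one_le_rpow hY hβ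
  set q : ℝ := 2 ^ (β - α)
  have hq_eq : q = 2 ^ β * 2 ^ (-α) := by rw [← Real.rpow_add zero_lt_two, ← sub_eq_add_neg]
  have hq : q < 1 := Real.rpow_lt_one_of_one_lt_of_neg one_lt_two (by linarith)
  have hgeom : Summable fun j : ℕ => K * 2 ^ β * q ^ j :=
    (summable_geometric_of_lt_one (by positivity) hq).mul_left _
  -- The block `k s = j` lies in `{2 ^ j ≤ u < 2 ^ (j + 1)}`: at most `K 2 ^ ((j + 1) β)` terms,
  -- each at most `2 ^ (-j α)`.
  set k : S → ℕ := fun s => Nat.log 2 ⌊u s⌋₊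
  have hblock (t : Finset S) (j : ℕ) : ∑ s ∈ t with k s = j, u s ^ (-α) ≤ K * 2 ^ β * q ^ j := by
    have hterm : ∀ s ∈ t.filter (k · = j), u s ^ (-α) ≤ ((2 : ℝ) ^ j) ^ (-α) := by
      intro s hs
      rw [← (Finset.mem_filter.1 hs).2]
      exact Real.rpow_le_rpow_of_nonpos (by positivity) (two_pow_log_floor_le (hu s))
        (by linarith)
    have hcard : ((t.filter (k · = j)).card : ℝ) ≤ K * ((2 : ℝ) ^ (j + 1)) ^ β := by
      refine (card_le (hfin _) fun s hs => ?_).trans (hKN _ (one_le_pow₀ one_le_two))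
      rw [← (Finset.mem_filter.1 hs).2]
      exact (lt_two_pow_log_floor_succ (zero_le_one.trans (hu s))).le
    calc ∑ s ∈ t with k s = j, u s ^ (-α)
        ≤ (t.filter (k · = j)).card * ((2 : ℝ) ^ j) ^ (-α) := by
          simpa using Finset.sum_le_sum hterm
      _ ≤ K * ((2 : ℝ) ^ (j + 1)) ^ β * ((2 : ℝ) ^ j) ^ (-α) := by gcongr
      _ = K * 2 ^ β * q ^ j := by
          rw [← Real.rpow_pow_comm zero_le_two, ← Real.rpow_pow_comm zero_le_two, hq_eq]
          ring
  refine summable_of_sum_le (c := ∑' j, K * 2 ^ β * q ^ j)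
    (fun s => Real.rpow_nonneg (zero_le_one.trans (hu s)) _) fun t => ?_
  rw [← Finset.sum_fiberwise_of_maps_to fun s hs => Finset.mem_image_of_mem k hs]
  exact (Finset.sum_le_sum fun j _ => hblock t j).trans
    (hgeom.sum_le_tsum _ fun _ _ => by positivity)

theorem tendsto_prod_div {S₁ S₂ : Type*} {u₁ : S₁ → ℝ} {u₂ : S₂ → ℝ} (hu₁ : ∀ s, 1 ≤ u₁ s)
    (hu₂ : ∀ s, 1 ≤ u₂ s) (hfin₁ : ∀ X, {s | u₁ s ≤ X}.Finite)
    (hfin₂ : ∀ X, {s | u₂ s ≤ X}.Finite) {A α : ℝ} {r : ℕ} (hα : 0 ≤ α)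
    (hN₁ : countingFn u₁ ~[atTop] fun X => A * (X ^ α * log X ^ r))
    (hsum : Summable fun s => u₂ s ^ (-α)) :
    Tendsto (fun X => countingFn (fun p : S₁ × S₂ => u₁ p.1 * u₂ p.2) X / (X ^ α * log X ^ r))
      atTop (𝓝 (A * ∑' s, u₂ s ^ (-α))) := by
  have hN₁O : countingFn u₁ =O[atTop] fun Y => Y ^ α * (1 + log Y) ^ r :=
    hN₁.isBigO.trans ((isBigO_const_mul_self A _ _).trans (isBigO_rpow_mul_log_pow_one_add α r))
  obtain ⟨K, hK, hKN⟩ := (mono hfin₁).exists_forall_le_mul_of_isBigO hN₁O fun Y hY =>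
    one_le_mul_of_one_le_of_one_le (Real.one_le_rpow hY hα)
      (one_le_pow₀ (by linarith [Real.log_nonneg hY]))
  have hbound : ∀ᶠ X in atTop, ∀ s,
      ‖countingFn u₁ (X / u₂ s) / (X ^ α * log X ^ r)‖ ≤ K * 2 ^ r * u₂ s ^ (-α) := by
    filter_upwards [eventually_ge_atTop (exp 1)] with X hX s
    have hD : 0 < X ^ α * log X ^ r := by
      have hX0 : 0 < X := (exp_pos 1).trans_le hX
      have : 0 < log X := Real.log_pos (by linarith [add_one_le_exp 1])
      positivity
    rw [Real.norm_of_nonneg (div_nonneg (nonneg _) hD.le), div_le_iff₀ hD]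
    exact apply_div_le_of_le_rpow_mul_one_add_log_pow (fun Y => eq_zero_of_lt hu₁) hK hKN (hu₂ s) hX
  have hlim := tendsto_tsum_of_dominated_convergence (hsum.mul_left (K * 2 ^ r))
    (fun s => hN₁.tendsto_comp_div_const_div (zero_lt_one.trans_le (hu₂ s))) hbound
  rw [tsum_mul_left] at hlim
  refine hlim.congr fun X => ?_
  rw [prod_eq_tsum hu₁ hu₂ hfin₁ hfin₂, tsum_div_const]

theorem nonempty_of_tendsto_div {S : Type*} {u : S → ℝ} {g : ℝ → ℝ}
    (h : Tendsto (fun X => countingFn u X / g X) atTop (𝓝 1)) : Nonempty S := by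
  by_contra hS
  rw [not_nonempty_iff] at hS
  have h0 : (fun X => countingFn u X / g X) = 0 := funext fun X => by simp [countingFn]
  rw [h0] at h
  exact one_ne_zero (tendsto_nhds_unique h tendsto_const_nhds)

end countingFn

open countingFn in
theorem product_distribution_general (S₁ S₂ : Type*) (f₁ : S₁ → ℕ) (f₂ : S₂ → ℕ)
    (hf₁ : ∀ s, 1 ≤ f₁ s) (hf₂ : ∀ s, 1 ≤ f₂ s)
    (hfin₁ : ∀ X : ℝ, {s : S₁ | (f₁ s : ℝ) ≤ X}.Finite)
    (hfin₂ : ∀ X : ℝ, {s : S₂ | (f₂ s : ℝ) ≤ X}.Finite)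
    (A₁ A₂ n₁ n₂ : ℝ) (r₁ r₂ : ℕ) (a b : ℝ)
    (hA₁ : 0 < A₁)
    (hn₂ : 0 < n₂)
    (ha : 0 < a) (hb : 0 < b) (hgap : 0 < n₁ / a - n₂ / b)
    (hF₁ : Tendsto (fun X : ℝ => (Nat.card {s : S₁ // (f₁ s : ℝ) ≤ X} : ℝ) /
        (A₁ * X ^ n₁ * Real.log X ^ r₁)) atTop (nhds 1))
    (hF₂ : Tendsto (fun X : ℝ => (Nat.card {s : S₂ // (f₂ s : ℝ) ≤ X} : ℝ) /
        (A₂ * X ^ n₂ * Real.log X ^ r₂)) atTop (nhds 1)) :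
    ∃ C : ℝ, 0 < C ∧
      Tendsto (fun X : ℝ =>
          (Nat.card {p : S₁ × S₂ // (f₁ p.1 : ℝ) ^ a * (f₂ p.2 : ℝ) ^ b ≤ X} : ℝ) /
        (C * X ^ (n₁ / a) * Real.log X ^ r₁)) atTop (nhds 1) := by
  set u₁ : S₁ → ℝ := fun s => (f₁ s : ℝ) ^ a
  set u₂ : S₂ → ℝ := fun s => (f₂ s : ℝ) ^ b
  have hu₁ (s : S₁) : 1 ≤ u₁ s := Real.one_le_rpow (Nat.one_le_cast.2 (hf₁ s)) ha.le
  have hu₂ (s : S₂) : 1 ≤ u₂ s := Real.one_le_rpow (Nat.one_le_cast.2 (hf₂ s)) hb.le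
  have hN₁ := isEquivalent_rpow (fun s => (f₁ s).cast_nonneg) ha (isEquivalent_of_tendsto_one hF₁)
  have hN₂ := isEquivalent_rpow (fun s => (f₂ s).cast_nonneg) hb (isEquivalent_of_tendsto_one hF₂)
  have hn₂b : 0 ≤ n₂ / b := by positivity
  have hsum : Summable fun s => u₂ s ^ (-(n₁ / a)) :=
    summable_rpow_neg_of_isBigO hu₂ (finite_rpow_le (fun s => (f₂ s).cast_nonneg) hfin₂ hb)
      (β := (n₂ / b + n₁ / a) / 2) (by linarith) (by linarith) <| hN₂.isBigO.trans <|
        (isBigO_const_mul_self _ _ _).trans (isBigO_rpow_mul_log_pow_rpow r₂ (by linarith))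
  have : Nonempty S₂ := nonempty_of_tendsto_div hF₂
  set C := A₁ / a ^ r₁ * ∑' s, u₂ s ^ (-(n₁ / a))
  have hC : 0 < C := mul_pos (by positivity) <|
    hsum.tsum_pos (fun s => by positivity) (Classical.arbitrary S₂)
      (Real.rpow_pos_of_pos (zero_lt_one.trans_le (hu₂ _)) _)
  refine ⟨C, hC, ?_⟩
  have h := (tendsto_prod_div hu₁ hu₂ (finite_rpow_le (fun s => (f₁ s).cast_nonneg) hfin₁ ha)
    (finite_rpow_le (fun s => (f₂ s).cast_nonneg) hfin₂ hb) (by linarith) hN₁ hsum).div_const C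
  rw [div_self hC.ne'] at h
  refine h.congr fun X => ?_
  rw [div_div, mul_comm, ← mul_assoc]
  rfl

/-- **Product lemma** (Lemma 2.2).  Let `S₁`, `S₂` be multisets of positive integers
(modelled as types `S i` with value maps `f i : S i → ℕ`, with finite counting functions
`F_i(X) = #{s : f_i s ≤ X}`).  Suppose `F_i(X) ~ A_i X^{n_i} (ln X)^{r_i}` with
`A_i > 0`, `0 < n_i ≤ 1`, `r_i ∈ ℤ_{≥0}`.  Let `a, b > 0` with `n₁/a - n₂/b > 0` and
`P_{a,b}(X) = #{(s₁,s₂) : (f₁ s₁)^a (f₂ s₂)^b ≤ X}`.  Then there is a constant `C > 0`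
with `P_{a,b}(X) ~ C X^{n₁/a} (ln X)^{r₁}`. -/
theorem product_distribution (S₁ S₂ : Type*) (f₁ : S₁ → ℕ) (f₂ : S₂ → ℕ)
    (hf₁ : ∀ s, 1 ≤ f₁ s) (hf₂ : ∀ s, 1 ≤ f₂ s)
    (hfin₁ : ∀ X : ℝ, {s : S₁ | (f₁ s : ℝ) ≤ X}.Finite)
    (hfin₂ : ∀ X : ℝ, {s : S₂ | (f₂ s : ℝ) ≤ X}.Finite)
    (A₁ A₂ n₁ n₂ : ℝ) (r₁ r₂ : ℕ) (a b : ℝ)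
    (hA₁ : 0 < A₁) (hA₂ : 0 < A₂)
    (hn₁ : 0 < n₁) (hn₁' : n₁ ≤ 1) (hn₂ : 0 < n₂) (hn₂' : n₂ ≤ 1)
    (ha : 0 < a) (hb : 0 < b) (hgap : 0 < n₁ / a - n₂ / b)
    (hF₁ : Tendsto (fun X : ℝ => (Nat.card {s : S₁ // (f₁ s : ℝ) ≤ X} : ℝ) /
        (A₁ * X ^ n₁ * Real.log X ^ r₁)) atTop (nhds 1))
    (hF₂ : Tendsto (fun X : ℝ => (Nat.card {s : S₂ // (f₂ s : ℝ) ≤ X} : ℝ) /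
        (A₂ * X ^ n₂ * Real.log X ^ r₂)) atTop (nhds 1)) :
    ∃ C : ℝ, 0 < C ∧
      Tendsto (fun X : ℝ =>
          (Nat.card {p : S₁ × S₂ // (f₁ p.1 : ℝ) ^ a * (f₂ p.2 : ℝ) ^ b ≤ X} : ℝ) /
        (C * X ^ (n₁ / a) * Real.log X ^ r₁)) atTop (nhds 1) :=
  product_distribution_general S₁ S₂ f₁ f₂ hf₁ hf₂ hfin₁ hfin₂ A₁ A₂ n₁ n₂ r₁ r₂ a b hA₁ hn₂ ha hb
    hgap hF₁ hF₂
end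
end
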